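/- For any finite chain complex, the squared analytic torsion A = ∏_k Det(L_k)^{k(-1)^{k+1}} equals the super pseudo determinant of the Dirac operator: A = ∏_k Det(D_k)^{(-1)^k}, where D_k = d_k^* d_k and L_k = d_k^* d_k + d_{k-1} d_{k-1}^*. -/

import Mathlib

/-!
For a symmetric matrix `A` the characteristic polynomial vanishes at `0` to order exactly
`card - rank A`, the multiplicity of the eigenvalue `0`; so `pseudoDet A` is `(-1) ^ rank A`
times the trailing coefficient of `A.charpoly`. Trailing coefficients and trailing degrees are
multiplicative, hence the polynomial identities `χ_A χ_B = X ^ card χ_(A + B)` (for `A * B = 0`)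
and `X ^ n χ_(Mᵀ M) = X ^ m χ_(M Mᵀ)` give
`Det(L_(k+1)) = Det(D_(k+1)) Det(d_k d_kᵀ) = Det(D_(k+1)) Det(D_k)`.
Substituted into the torsion, the exponents of each `Det(D_k)` telescope to `(-1) ^ k`, and the
boundary factor left over is a power of `Det(D_r) = Det 0 = 1`.
-/

open Matrix

/-- The pseudo determinant of a real square matrix: the product of its nonzero
eigenvalues (for the symmetric matrices considered here), computed as
`(-1)^rank` times the lowest-order nonzero coefficient of the characteristic
polynomial. -/
noncomputable def pseudoDet {V : Type*} [Fintype V] [DecidableEq V]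
    (A : Matrix V V ℝ) : ℝ :=
  (-1 : ℝ) ^ A.rank * A.charpoly.coeff (Fintype.card V - A.rank)

open Polynomial

theorem Polynomial.trailingCoeff_X_pow_mul {R : Type*} [Semiring R] [NoZeroDivisors R]
    [Nontrivial R] (k : ℕ) (p : R[X]) : (X ^ k * p).trailingCoeff = p.trailingCoeff := by
  rw [trailingCoeff_mul, trailingCoeff, natTrailingDegree_X_pow, coeff_X_pow_self, one_mul]

namespace Matrix

theorem isHermitian_transpose_mul_self {m n : Type*} [Fintype m] (M : Matrix m n ℝ) :
    (Mᵀ * M).IsHermitian := by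
  simpa using isHermitian_conjTranspose_mul_self M

theorem isHermitian_mul_transpose_self {m n : Type*} [Fintype n] (M : Matrix m n ℝ) :
    (M * Mᵀ).IsHermitian := by
  simpa using isHermitian_mul_conjTranspose_self M

variable {n : Type*} [Fintype n] [DecidableEq n]

theorem charmatrix_mul_charmatrix_of_mul_eq_zero {R : Type*} [CommRing R] {A B : Matrix n n R}
    (hAB : A * B = 0) :
    charmatrix A * charmatrix B = scalar n (X : R[X]) * charmatrix (A + B) := by
  have hX : ∀ M : Matrix n n R[X], scalar n (X : R[X]) * M = M * scalar n X :=
    fun M => (scalar_commute _ (Commute.all X) M).eq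
  simp only [charmatrix, map_add, mul_sub, sub_mul, ← map_mul, hAB, map_zero, add_mul, hX]
  abel

theorem charpoly_mul_charpoly_of_mul_eq_zero {R : Type*} [CommRing R] {A B : Matrix n n R}
    (hAB : A * B = 0) :
    A.charpoly * B.charpoly = X ^ Fintype.card n * (A + B).charpoly := by
  rw [charpoly, charpoly, charpoly, ← det_mul, charmatrix_mul_charmatrix_of_mul_eq_zero hAB,
    det_mul, scalar_apply, det_diagonal, Finset.prod_const, Finset.card_univ]

namespace IsHermitian

variable {A B : Matrix n n ℝ}

theorem natTrailingDegree_charpoly (hA : A.IsHermitian) :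
    A.charpoly.natTrailingDegree = Fintype.card n - A.rank := by
  classical
  rw [← rootMultiplicity_eq_natTrailingDegree', ← count_roots, hA.roots_charpoly_eq_eigenvalues,
    Multiset.count_map, hA.rank_eq_card_non_zero_eigs, ← Fintype.card_subtype_compl]
  simp only [Fintype.card_subtype, ne_eq, not_not, eq_comm, Finset.card_def, Finset.filter_val,
    Function.comp_apply, RCLike.ofReal_real_eq_id, id]

theorem pseudoDet_eq_trailingCoeff (hA : A.IsHermitian) :
    pseudoDet A = (-1) ^ A.rank * A.charpoly.trailingCoeff := by
  rw [pseudoDet, trailingCoeff, hA.natTrailingDegree_charpoly]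

theorem pseudoDet_ne_zero (hA : A.IsHermitian) : pseudoDet A ≠ 0 := by
  rw [hA.pseudoDet_eq_trailingCoeff]
  exact mul_ne_zero (pow_ne_zero _ (by norm_num))
    (trailingCoeff_nonzero_iff_nonzero.mpr (charpoly_monic A).ne_zero)

theorem pseudoDet_add_of_mul_eq_zero (hA : A.IsHermitian) (hB : B.IsHermitian)
    (hAB : A * B = 0) : pseudoDet (A + B) = pseudoDet A * pseudoDet B := by
  have hχ := charpoly_mul_charpoly_of_mul_eq_zero hAB
  have hrank : (A + B).rank = A.rank + B.rank := by
    have h := congrArg natTrailingDegree hχ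
    rw [natTrailingDegree_mul (charpoly_monic A).ne_zero (charpoly_monic B).ne_zero,
      natTrailingDegree_mul (pow_ne_zero _ X_ne_zero) (charpoly_monic _).ne_zero,
      natTrailingDegree_X_pow, hA.natTrailingDegree_charpoly, hB.natTrailingDegree_charpoly,
      (hA.add hB).natTrailingDegree_charpoly] at h
    have := A.rank_le_card_width
    have := B.rank_le_card_width
    have := (A + B).rank_le_card_width
    omega
  have hcoeff := congrArg trailingCoeff hχ
  rw [trailingCoeff_mul, trailingCoeff_X_pow_mul] at hcoeff
  rw [hA.pseudoDet_eq_trailingCoeff, hB.pseudoDet_eq_trailingCoeff,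
    (hA.add hB).pseudoDet_eq_trailingCoeff, hrank, ← hcoeff, pow_add]
  ring

end IsHermitian

theorem pseudoDet_transpose_mul_self {m : Type*} [Fintype m] [DecidableEq m] (M : Matrix m n ℝ) :
    pseudoDet (Mᵀ * M) = pseudoDet (M * Mᵀ) := by
  have hcoeff := congrArg trailingCoeff (charpoly_mul_comm' Mᵀ M)
  rw [trailingCoeff_X_pow_mul, trailingCoeff_X_pow_mul] at hcoeff
  rw [(isHermitian_transpose_mul_self M).pseudoDet_eq_trailingCoeff,
    (isHermitian_mul_transpose_self M).pseudoDet_eq_trailingCoeff, rank_transpose_mul_self,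
    rank_self_mul_transpose, hcoeff]

end Matrix

theorem pseudoDet_zero {n : Type*} [Fintype n] [DecidableEq n] :
    pseudoDet (0 : Matrix n n ℝ) = 1 := by
  rw [pseudoDet, rank_zero, pow_zero, one_mul, Nat.sub_zero,
    ← charpoly_natDegree_eq_dim (0 : Matrix n n ℝ),
    (charpoly_monic _).coeff_natDegree]

theorem prod_range_zpow_telescope {G : Type*} [CommGroupWithZero G] {a b : ℕ → G}
    (ha : ∀ k, a k ≠ 0) (hb : ∀ k, b (k + 1) = a (k + 1) * a k) (n : ℕ) :
    ∏ k ∈ Finset.range (n + 1), b k ^ ((k : ℤ) * (-1) ^ (k + 1)) =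
      (∏ k ∈ Finset.range n, a k ^ ((-1 : ℤ) ^ k)) * a n ^ ((n : ℤ) * (-1) ^ (n + 1)) := by
  induction n with
  | zero => simp
  | succ n ih =>
    have hexp : (n : ℤ) * (-1) ^ (n + 1) + (n + 1 : ℕ) * (-1) ^ (n + 1 + 1) = (-1) ^ n := by
      push_cast; ring
    rw [Finset.prod_range_succ, ih, hb, mul_zpow, Finset.prod_range_succ, ← hexp,
      zpow_add₀ (ha n), mul_comm (a (n + 1) ^ _)]
    simp only [mul_assoc]

theorem torsion_eq_superdet_dirac_general (r : ℕ) (f : ℕ → ℕ)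
    (d : ∀ k : ℕ, Matrix (Fin (f (k + 1))) (Fin (f k)) ℝ)
    (hcomplex : ∀ k, d (k + 1) * d k = 0)
    (hfin : ∀ k, r ≤ k → d k = 0)
    (L : ∀ k : ℕ, Matrix (Fin (f k)) (Fin (f k)) ℝ)
    (hLsucc : ∀ k, L (k + 1) = (d (k + 1))ᵀ * d (k + 1) + d k * (d k)ᵀ) :
    ∏ k ∈ Finset.range (r + 1), pseudoDet (L k) ^ ((k : ℤ) * (-1 : ℤ) ^ (k + 1)) =
      ∏ k ∈ Finset.range (r + 1), pseudoDet ((d k)ᵀ * d k) ^ ((-1 : ℤ) ^ k) := by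
  have hL : ∀ k, pseudoDet (L (k + 1)) =
      pseudoDet ((d (k + 1))ᵀ * d (k + 1)) * pseudoDet ((d k)ᵀ * d k) := by
    intro k
    have hzero : (d (k + 1))ᵀ * d (k + 1) * (d k * (d k)ᵀ) = 0 := by
      rw [Matrix.mul_assoc, ← Matrix.mul_assoc (d (k + 1)), hcomplex, Matrix.zero_mul,
        Matrix.mul_zero]
    rw [hLsucc, (isHermitian_transpose_mul_self _).pseudoDet_add_of_mul_eq_zero
      (isHermitian_mul_transpose_self _) hzero, pseudoDet_transpose_mul_self (d k)]
  have hr : pseudoDet ((d r)ᵀ * d r) = 1 := by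
    rw [hfin r le_rfl, Matrix.mul_zero, pseudoDet_zero]
  rw [prod_range_zpow_telescope (fun k => (isHermitian_transpose_mul_self (d k)).pseudoDet_ne_zero)
    hL, Finset.prod_range_succ, hr, _root_.one_zpow, _root_.one_zpow]

/-- for a finite chain complex given by matrices
`d k : ℝ^{f k} → ℝ^{f (k+1)}` with `d (k+1) * d k = 0` and `d k = 0` for `k ≥ r`,
the squared analytic torsion `∏_k Det(L k)^{k (-1)^{k+1}}` equals the super
pseudo determinant of the Dirac operator `∏_k Det(D k)^{(-1)^k}`, where
`D k = d_kᵀ d_k`, `L 0 = d₀ᵀ d₀` and `L (k+1) = d_{k+1}ᵀ d_{k+1} + d_k d_kᵀ`. -/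
theorem torsion_eq_superdet_dirac (r : ℕ) (f : ℕ → ℕ)
    (d : ∀ k : ℕ, Matrix (Fin (f (k + 1))) (Fin (f k)) ℝ)
    (hcomplex : ∀ k, d (k + 1) * d k = 0)
    (hfin : ∀ k, r ≤ k → d k = 0)
    (L : ∀ k : ℕ, Matrix (Fin (f k)) (Fin (f k)) ℝ)
    (hL0 : L 0 = (d 0)ᵀ * d 0)
    (hLsucc : ∀ k, L (k + 1) = (d (k + 1))ᵀ * d (k + 1) + d k * (d k)ᵀ) :
    ∏ k ∈ Finset.range (r + 1), pseudoDet (L k) ^ ((k : ℤ) * (-1 : ℤ) ^ (k + 1)) =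
      ∏ k ∈ Finset.range (r + 1), pseudoDet ((d k)ᵀ * d k) ^ ((-1 : ℤ) ^ k) :=
  torsion_eq_superdet_dirac_general r f d hcomplex hfin L hLsucc
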